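/- For each fixed S > 0 and K > 0, the function σ ↦ C_BS(S, K, σ) is strictly increasing on (0, ∞). -/

import Mathlib

open Real Set Filter

/-- Standard normal cdf. -/
noncomputable def stdNormalCDF (x : ℝ) : ℝ :=
  ∫ t in Set.Iio x, Real.exp (-t ^ 2 / 2) / Real.sqrt (2 * Real.pi)

/-- Black–Scholes call price with maturity `T`. -/
noncomputable def C_BS (T S K σ : ℝ) : ℝ :=
  S * stdNormalCDF (Real.log (S / K) / (σ * Real.sqrt T) + σ * Real.sqrt T / 2) -
  K * stdNormalCDF (Real.log (S / K) / (σ * Real.sqrt T) - σ * Real.sqrt T / 2)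

/-!
The price depends on `σ` only through the total volatility `v = σ √T`. Writing
`L = log (S / K)`, `d± = L / v ± v / 2` and `φ` for the normal density, one has
`d₋² = d₊² - 2 L`, hence `K φ(d₋) = S φ(d₊)`. With this identity the derivative of
`S N(d₊) - K N(d₋)` in `v` collapses to the vega `S φ(d₊) > 0`.
-/

open MeasureTheory

theorem hasDerivAt_integral_Iio {E : Type*} [NormedAddCommGroup E] [NormedSpace ℝ E]
    [CompleteSpace E] {f : ℝ → E} {x : ℝ} (hf : Integrable f) (hx : ContinuousAt f x) :
    HasDerivAt (fun y => ∫ t in Iio y, f t) (f x) x := by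
  have hsplit : ∀ y, ∫ t in Iio y, f t = (∫ t in Iio 0, f t) + ∫ t in (0 : ℝ)..y, f t := by
    intro y
    rw [setIntegral_congr_set (Iio_ae_eq_Iic (a := y)),
      setIntegral_congr_set (Iio_ae_eq_Iic (a := (0 : ℝ)))]
    rw [← intervalIntegral.integral_Iic_sub_Iic hf.integrableOn hf.integrableOn,
      add_sub_cancel]
  rw [funext hsplit]
  exact (intervalIntegral.integral_hasDerivAt_right hf.intervalIntegrable
    hf.aestronglyMeasurable.stronglyMeasurableAtFilter hx).const_add _

noncomputable def stdNormalPDF (x : ℝ) : ℝ := Real.exp (-x ^ 2 / 2) / Real.sqrt (2 * Real.pi)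

theorem stdNormalPDF_pos (x : ℝ) : 0 < stdNormalPDF x := by
  unfold stdNormalPDF; positivity

theorem continuous_stdNormalPDF : Continuous stdNormalPDF := by
  unfold stdNormalPDF; fun_prop

theorem integrable_stdNormalPDF : Integrable stdNormalPDF := by
  have hform : stdNormalPDF = fun x => Real.exp (-(1 / 2) * x ^ 2) / Real.sqrt (2 * Real.pi) := by
    funext x
    rw [stdNormalPDF]
    ring_nf
  rw [hform]
  exact (integrable_exp_neg_mul_sq (by norm_num)).div_const _

theorem hasDerivAt_stdNormalCDF (x : ℝ) : HasDerivAt stdNormalCDF (stdNormalPDF x) x :=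
  hasDerivAt_integral_Iio integrable_stdNormalPDF continuous_stdNormalPDF.continuousAt

theorem stdNormalPDF_div_sub_half (L : ℝ) {v : ℝ} (hv : v ≠ 0) :
    stdNormalPDF (L / v - v / 2) = Real.exp L * stdNormalPDF (L / v + v / 2) := by
  have hprod : L / v * (v / 2) = L / 2 := by field_simp
  have hsq : -(L / v - v / 2) ^ 2 / 2 = L + -(L / v + v / 2) ^ 2 / 2 := by
    linear_combination 2 * hprod
  rw [stdNormalPDF, stdNormalPDF, hsq, Real.exp_add, mul_div_assoc]

noncomputable def callPriceTotalVol (S K v : ℝ) : ℝ :=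
  S * stdNormalCDF (Real.log (S / K) / v + v / 2) - K * stdNormalCDF (Real.log (S / K) / v - v / 2)

theorem C_BS_eq_callPriceTotalVol (T S K σ : ℝ) :
    C_BS T S K σ = callPriceTotalVol S K (σ * Real.sqrt T) :=
  rfl

theorem hasDerivAt_div_add_half (L : ℝ) {v : ℝ} (hv : v ≠ 0) :
    HasDerivAt (fun w => L / w + w / 2) (-L / v ^ 2 + 1 / 2) v := by
  rw [show -L / v ^ 2 + 1 / 2 = L * -(v ^ 2)⁻¹ + 1 / 2 by ring]
  exact ((hasDerivAt_inv hv).const_mul L).add ((hasDerivAt_id' v).div_const 2)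

theorem hasDerivAt_div_sub_half (L : ℝ) {v : ℝ} (hv : v ≠ 0) :
    HasDerivAt (fun w => L / w - w / 2) (-L / v ^ 2 - 1 / 2) v := by
  rw [show -L / v ^ 2 - 1 / 2 = L * -(v ^ 2)⁻¹ - 1 / 2 by ring]
  exact ((hasDerivAt_inv hv).const_mul L).sub ((hasDerivAt_id' v).div_const 2)

theorem hasDerivAt_callPriceTotalVol {S K v : ℝ} (hS : 0 < S) (hK : 0 < K) (hv : v ≠ 0) :
    HasDerivAt (callPriceTotalVol S K) (S * stdNormalPDF (Real.log (S / K) / v + v / 2)) v := by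
  set L := Real.log (S / K)
  have hplus := ((hasDerivAt_stdNormalCDF _).comp v (hasDerivAt_div_add_half L hv)).const_mul S
  have hminus := ((hasDerivAt_stdNormalCDF _).comp v (hasDerivAt_div_sub_half L hv)).const_mul K
  have hφ : K * stdNormalPDF (L / v - v / 2) = S * stdNormalPDF (L / v + v / 2) := by
    rw [stdNormalPDF_div_sub_half L hv, Real.exp_log (div_pos hS hK)]
    field_simp
  refine (hplus.sub hminus).congr_deriv ?_
  linear_combination (L / v ^ 2 + 1 / 2) * hφ

theorem strictMonoOn_callPriceTotalVol {S K : ℝ} (hS : 0 < S) (hK : 0 < K) :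
    StrictMonoOn (callPriceTotalVol S K) (Ioi 0) := by
  have hderiv : ∀ v ∈ Ioi (0 : ℝ), HasDerivAt (callPriceTotalVol S K) _ v :=
    fun v hv => hasDerivAt_callPriceTotalVol hS hK (ne_of_gt hv)
  refine strictMonoOn_of_deriv_pos (convex_Ioi 0)
    (fun v hv => (hderiv v hv).continuousAt.continuousWithinAt) fun v hv => ?_
  rw [interior_Ioi] at hv
  rw [(hderiv v hv).deriv]
  exact mul_pos hS (stdNormalPDF_pos _)

/-- The Black–Scholes price is strictly increasing in volatility. -/
theorem C_BS_strictMonoOn (T : ℝ) (hT : 0 < T) (S K : ℝ) (hS : 0 < S) (hK : 0 < K) :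
    StrictMonoOn (fun σ => C_BS T S K σ) (Set.Ioi 0) := by
  have hvol : StrictMonoOn (fun σ : ℝ => σ * Real.sqrt T) (Ioi 0) :=
    (strictMono_mul_right_of_pos (Real.sqrt_pos.2 hT)).strictMonoOn _
  have hmaps : MapsTo (fun σ : ℝ => σ * Real.sqrt T) (Ioi 0) (Ioi 0) :=
    fun σ hσ => mul_pos hσ (Real.sqrt_pos.2 hT)
  simp only [C_BS_eq_callPriceTotalVol]
  exact (strictMonoOn_callPriceTotalVol hS hK).comp hvol hmaps
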